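/- arXiv:1812.09529 — 7 statements merged into one kernel-verified Lean document; each statement's English description precedes it below -/
import Mathlib

section
/- Let L be a finite bounded lattice, n ≥ 1, let f : L^n → L be an n-ary aggregation function, and let a ∈ L^n. Then the pointwise supremum ⋁{ g(x) : g is an n-ary aggregation function on L with g(a) = f(a) } equals, for every x ∈ L^n: 0 if x = (0,…,0); f(a) if (0,…,0) < x ≤ a; and 1 otherwise. -/
open Classical

private lemma le_bot_tuple {L : Type*} [Lattice L] [BoundedOrder L] {n : ℕ}
    {y : Fin n → L} (h : y ≤ (fun _ => (⊥ : L))) : y = fun _ => (⊥ : L) :=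
  funext fun i => le_bot_iff.mp (h i)

/-- Let `L` be a finite bounded lattice, `f : Lⁿ → L` an aggregation
function and `a ∈ Lⁿ`.  Then for every `x ∈ Lⁿ`, the value
`⋁ { g(x) : g an n-ary aggregation function with g(a) = f(a) }` equals
`0` if `x = (0,…,0)`, `f(a)` if `(0,…,0) < x ≤ a`, and `1` otherwise.
The supremum is expressed via `IsLUB`. -/
theorem sup_agg_section_eq {L : Type*} [Lattice L] [BoundedOrder L] [Fintype L]
    {n : ℕ} (hn : 1 ≤ n) (f : (Fin n → L) → L)
    (hm : Monotone f)
    (h0 : f (fun _ => (⊥ : L)) = ⊥) (h1 : f (fun _ => (⊤ : L)) = ⊤)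
    (a : Fin n → L) :
    ∀ x : Fin n → L,
      IsLUB
        {y : L | ∃ g : (Fin n → L) → L,
          Monotone g ∧ g (fun _ => (⊥ : L)) = ⊥ ∧ g (fun _ => (⊤ : L)) = ⊤ ∧
          g a = f a ∧ y = g x}
        (if x = (fun _ => (⊥ : L)) then ⊥ else if x ≤ a then f a else ⊤) := by
  intro x
  by_cases hx0 : x = (fun _ => (⊥ : L))
  · rw [if_pos hx0]
    constructor
    · rintro y ⟨g, hg, hgb, hgt, hga, rfl⟩
      rw [hx0, hgb]
    · intro c hc
      exact hc ⟨f, hm, h0, h1, rfl, (hx0 ▸ h0).symm⟩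
  · rw [if_neg hx0]
    by_cases hxa : x ≤ a
    · rw [if_pos hxa]
      -- the witness function
      set g : (Fin n → L) → L := fun y =>
        if y = (fun _ => (⊥ : L)) then ⊥ else if y ≤ a then f a else ⊤ with hgdef
      have hgmono : Monotone g := by
        intro y z hyz
        by_cases hy0 : y = (fun _ => (⊥ : L))
        · simp [hgdef, hy0]
        · have hz0 : z ≠ (fun _ => (⊥ : L)) := fun h => hy0 (le_bot_tuple (h ▸ hyz))
          by_cases hzA : z ≤ a
          · have hyA : y ≤ a := le_trans hyz hzA
            simp [hgdef, hy0, hz0, hyA, hzA]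
          · simp [hgdef, hy0, hz0, hzA]
      have hgb : g (fun _ => (⊥ : L)) = ⊥ := by simp [hgdef]
      have hgt : g (fun _ => (⊤ : L)) = ⊤ := by
        by_cases ht0 : (fun _ : Fin n => (⊤ : L)) = (fun _ => (⊥ : L))
        · simp only [hgdef, if_pos ht0]
          exact (congrFun ht0 ⟨0, hn⟩).symm
        · by_cases hta : (fun _ : Fin n => (⊤ : L)) ≤ a
          · have ha : a = fun _ => (⊤ : L) := funext fun i => top_le_iff.mp (hta i)
            simp [hgdef, ht0, hta, ha, h1]
          · simp [hgdef, ht0, hta]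
      have hga : g a = f a := by
        by_cases ha0 : a = (fun _ => (⊥ : L))
        · subst ha0; simp [hgdef, h0]
        · simp [hgdef, ha0]
      constructor
      · rintro y ⟨g', hg', hgb', hgt', hga', rfl⟩
        calc g' x ≤ g' a := hg' hxa
          _ = f a := hga'
      · intro c hc
        have : f a = g x := by simp [hgdef, hx0, hxa]
        exact hc ⟨g, hgmono, hgb, hgt, hga, this⟩
    · rw [if_neg hxa]
      set g : (Fin n → L) → L := fun y => if y ≤ a then f y else ⊤ with hgdef
      have hgmono : Monotone g := by
        intro y z hyz
        by_cases hzA : z ≤ a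
        · have hyA : y ≤ a := le_trans hyz hzA
          simp only [hgdef, if_pos hzA, if_pos hyA]
          exact hm hyz
        · simp [hgdef, hzA]
      have hgb : g (fun _ => (⊥ : L)) = ⊥ := by
        have : (fun _ : Fin n => (⊥ : L)) ≤ a := fun i => bot_le
        simp [hgdef, this, h0]
      have hgt : g (fun _ => (⊤ : L)) = ⊤ := by
        by_cases hta : (fun _ : Fin n => (⊤ : L)) ≤ a
        · simp [hgdef, hta, h1]
        · simp [hgdef, hta]
      have hga : g a = f a := by simp [hgdef]
      constructor
      · rintro y ⟨g', hg', hgb', hgt', hga', rfl⟩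
        exact le_top
      · intro c hc
        have : (⊤ : L) = g x := by simp [hgdef, hxa]
        exact hc ⟨g, hgmono, hgb, hgt, hga, this⟩
end

section
/- Let L be a bounded lattice, n ≥ 1, a = (a_1,…,a_n) ∈ L^n and b ∈ L with ⋀_{i=1}^n a_i ≤ b. Define χ_{a,b} : L^n → L by χ_{a,b}(x) = b ∧ ⋁_{i=1}^n x_i if x ≤ a (componentwise), and χ_{a,b}(x) = ⋁_{i=1}^n x_i otherwise. Then χ_{a,b} is an n-ary idempotent aggregation function on L. -/
open Classical

/-- `χ_{a,b}(x) = b ∧ ⋁ᵢ xᵢ` if `x ≤ a` componentwise, and `χ_{a,b}(x) = ⋁ᵢ xᵢ`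
otherwise. -/
noncomputable def chi {L : Type*} [Lattice L] [BoundedOrder L] {n : ℕ}
    (a : Fin n → L) (b : L) (x : Fin n → L) : L :=
  if x ≤ a then b ⊓ Finset.univ.sup x else Finset.univ.sup x

/-- If `a ∈ Lⁿ`, `b ∈ L` with `⋀ᵢ aᵢ ≤ b`, then `χ_{a,b}` is an n-ary
idempotent aggregation function on the bounded lattice `L`. -/
theorem chi_is_idempotent_aggregation {L : Type*} [Lattice L] [BoundedOrder L]
    {n : ℕ} (hn : 1 ≤ n) (a : Fin n → L) (b : L)
    (hb : Finset.univ.inf a ≤ b) :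
    Monotone (chi a b) ∧
      chi a b (fun _ => (⊥ : L)) = ⊥ ∧
      chi a b (fun _ => (⊤ : L)) = ⊤ ∧
      ∀ c : L, chi a b (fun _ => c) = c := by
  have hne : (Finset.univ : Finset (Fin n)).Nonempty := by
    have : Nonempty (Fin n) := ⟨⟨0, hn⟩⟩
    exact Finset.univ_nonempty
  have hconst : ∀ c : L, Finset.univ.sup (fun _ : Fin n => c) = c := fun c =>
    Finset.sup_const hne c
  have idem : ∀ c : L, chi a b (fun _ => c) = c := by
    intro c
    unfold chi
    split
    next h =>
      have hc : c ≤ Finset.univ.inf a := by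
        apply Finset.le_inf
        intro i _
        exact h i
      rw [hconst, inf_eq_right.mpr (hc.trans hb)]
    next h => exact hconst c
  refine ⟨?_, ?_, ?_, idem⟩
  · intro x y hxy
    unfold chi
    have hsup : Finset.univ.sup x ≤ Finset.univ.sup y :=
      Finset.sup_mono_fun (fun i _ => hxy i)
    by_cases hy : y ≤ a
    · have hx : x ≤ a := hxy.trans hy
      simp only [hx, hy, if_true]
      exact inf_le_inf_left b hsup
    · by_cases hx : x ≤ a
      · simp only [hx, hy, if_true, if_false]
        exact le_trans inf_le_right hsup
      · simp only [hx, hy, if_false]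
        exact hsup
  · simpa using idem ⊥
  · simpa using idem ⊤
end

section
/- Let L be a finite bounded lattice, n ≥ 1, let f : L^n → L be an n-ary idempotent aggregation function and let a ∈ L^n. Then the pointwise supremum ⋁{ g(x) : g is an n-ary idempotent aggregation function on L with g(a) = f(a) } equals χ_{a,f(a)}(x) for all x ∈ L^n, where χ_{a,b} : L^n → L is defined by χ_{a,b}(x) = b ∧ ⋁_{i=1}^n x_i if x ≤ a (componentwise), and χ_{a,b}(x) = ⋁_{i=1}^n x_i otherwise. -/
open Classical

/-- For a finite bounded lattice `L`, an n-ary idempotent aggregation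
function `f` and `a ∈ Lⁿ`, the pointwise supremum
`⋁ { g(x) : g an n-ary idempotent aggregation function with g(a) = f(a) }`
equals `χ_{a,f(a)}(x)` for every `x ∈ Lⁿ`.  The supremum is expressed via `IsLUB`. -/
theorem sup_idem_agg_section_eq_chi {L : Type*} [Lattice L] [BoundedOrder L]
    [Fintype L] {n : ℕ} (hn : 1 ≤ n) (f : (Fin n → L) → L)
    (hm : Monotone f)
    (h0 : f (fun _ => (⊥ : L)) = ⊥) (h1 : f (fun _ => (⊤ : L)) = ⊤)
    (hidem : ∀ c : L, f (fun _ => c) = c)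
    (a : Fin n → L) :
    ∀ x : Fin n → L,
      IsLUB
        {y : L | ∃ g : (Fin n → L) → L,
          Monotone g ∧ g (fun _ => (⊥ : L)) = ⊥ ∧ g (fun _ => (⊤ : L)) = ⊤ ∧
          (∀ c : L, g (fun _ => c) = c) ∧ g a = f a ∧ y = g x}
        (chi a (f a) x) := by
  intro x
  have hne : (Finset.univ : Finset (Fin n)).Nonempty := ⟨⟨0, hn⟩, Finset.mem_univ _⟩
  have hsupc : ∀ c : L, (Finset.univ : Finset (Fin n)).sup (fun _ => c) = c :=
    fun c => Finset.sup_const hne c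
  -- basic fact: for any z, z ≤ const (sup z)
  have hle : ∀ z : Fin n → L, z ≤ (fun _ => Finset.univ.sup z) :=
    fun z i => Finset.le_sup (Finset.mem_univ i)
  -- chi is monotone
  have hchi_mono : Monotone (chi a (f a)) := by
    intro u v huv
    unfold chi
    by_cases hu : u ≤ a
    · by_cases hv : v ≤ a
      · simp only [if_pos hu, if_pos hv]
        exact inf_le_inf_left _ (Finset.sup_mono_fun fun i _ => huv i)
      · simp only [if_pos hu, if_neg hv]
        exact le_trans inf_le_right (Finset.sup_mono_fun fun i _ => huv i)
    · have hv : ¬ v ≤ a := fun h => hu (le_trans huv h)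
      simp only [if_neg hu, if_neg hv]
      exact Finset.sup_mono_fun fun i _ => huv i
  -- chi is idempotent
  have hchi_idem : ∀ c : L, chi a (f a) (fun _ => c) = c := by
    intro c
    unfold chi
    by_cases h : (fun _ => c : Fin n → L) ≤ a
    · have hc : c ≤ f a := by
        have := hm h
        rwa [hidem c] at this
      rw [if_pos h, hsupc c, inf_eq_right.mpr hc]
    · rw [if_neg h, hsupc c]
  -- chi a (f a) a = f a
  have hfa_le : f a ≤ Finset.univ.sup a := by
    have := hm (hle a)
    rwa [hidem] at this
  have hchi_a : chi a (f a) a = f a := by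
    unfold chi
    rw [if_pos le_rfl, inf_eq_left.mpr hfa_le]
  constructor
  · -- upper bound
    rintro y ⟨g, hgm, -, -, hgidem, hga, rfl⟩
    have hgx_sup : g x ≤ Finset.univ.sup x := by
      have := hgm (hle x)
      rwa [hgidem] at this
    unfold chi
    by_cases h : x ≤ a
    · rw [if_pos h]
      exact le_inf (hga ▸ hgm h) hgx_sup
    · rw [if_neg h]; exact hgx_sup
  · -- least
    intro u hu
    exact hu ⟨chi a (f a), hchi_mono, hchi_idem ⊥, hchi_idem ⊤, hchi_idem, hchi_a, rfl⟩
end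

section
/- Let L be a bounded lattice, n ≥ 1, and let f : L^n → L be an n-ary idempotent aggregation function. For a,b,c,d ∈ L with a ≤ b ≤ c and a ≤ d ≤ c, define ι_{(a,b,c),d} : L^3 → L by ι_{(a,b,c),d}(x_1,x_2,x_3) = d ∧ (x_1 ∨ x_2 ∨ x_3) if (x_1,x_2,x_3) ≤ (a,b,c) componentwise, and ι_{(a,b,c),d}(x_1,x_2,x_3) = x_1 ∨ x_2 ∨ x_3 otherwise. Define χ_{a,b} : L^n → L by χ_{a,b}(x) = b ∧ ⋁_{i=1}^n x_i if x ≤ a componentwise, and χ_{a,b}(x) = ⋁_{i=1}^n x_i otherwise. Then for every a = (a_1,…,a_n) ∈ L^n and every x = (x_1,…,x_n) ∈ L^n: χ_{a,f(a)}(x) = ⋁_{i=1}^n ι_{(⋀a, a_i, ⋁a), f(a)}(⋀x, x_i, ⋁x), where ⋀a = ⋀_{j=1}^n a_j, ⋁a = ⋁_{j=1}^n a_j, and similarly for x. -/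
open Classical

/-- `ι_{(p,q,r),s}(x₁,x₂,x₃) = s ∧ (x₁ ∨ x₂ ∨ x₃)` if `(x₁,x₂,x₃) ≤ (p,q,r)`
componentwise, and `x₁ ∨ x₂ ∨ x₃` otherwise. -/
noncomputable def iota {L : Type*} [Lattice L] (p q r s : L) (x₁ x₂ x₃ : L) : L :=
  if x₁ ≤ p ∧ x₂ ≤ q ∧ x₃ ≤ r then s ⊓ (x₁ ⊔ x₂ ⊔ x₃) else x₁ ⊔ x₂ ⊔ x₃

/-- For an n-ary idempotent aggregation function `f` on a bounded
lattice `L`, for every `a, x ∈ Lⁿ`: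
`χ_{a,f(a)}(x) = ⋁ᵢ ι_{(⋀a, aᵢ, ⋁a), f(a)}(⋀x, xᵢ, ⋁x)`. -/
theorem chi_eq_sup_iota {L : Type*} [Lattice L] [BoundedOrder L]
    {n : ℕ} (hn : 1 ≤ n) (f : (Fin n → L) → L)
    (hm : Monotone f)
    (h0 : f (fun _ => (⊥ : L)) = ⊥) (h1 : f (fun _ => (⊤ : L)) = ⊤)
    (hidem : ∀ c : L, f (fun _ => c) = c) :
    ∀ a x : Fin n → L,
      chi a (f a) x =
        Finset.univ.sup (fun i : Fin n =>
          iota (Finset.univ.inf a) (a i) (Finset.univ.sup a) (f a)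
            (Finset.univ.inf x) (x i) (Finset.univ.sup x)) := by
  intro a x
  have hIS : ∀ i : Fin n, Finset.univ.inf x ⊔ x i ⊔ Finset.univ.sup x
      = Finset.univ.sup x := by
    intro i
    have h1' : Finset.univ.inf x ≤ x i := Finset.inf_le (Finset.mem_univ i)
    have h2' : x i ≤ Finset.univ.sup x := Finset.le_sup (Finset.mem_univ i)
    rw [sup_eq_right.mpr h1', sup_eq_right.mpr h2']
  by_cases hxa : x ≤ a
  · have hterm : ∀ i : Fin n,
        iota (Finset.univ.inf a) (a i) (Finset.univ.sup a) (f a)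
          (Finset.univ.inf x) (x i) (Finset.univ.sup x)
        = f a ⊓ Finset.univ.sup x := by
      intro i
      rw [iota, if_pos ⟨Finset.inf_mono_fun (fun j _ => hxa j), hxa i,
        Finset.sup_mono_fun (fun j _ => hxa j)⟩, hIS i]
    rw [chi, if_pos hxa]
    simp only [hterm]
    haveI : Nonempty (Fin n) := ⟨⟨0, hn⟩⟩
    exact (Finset.sup_const Finset.univ_nonempty _).symm
  · rw [chi, if_neg hxa]
    simp only [Pi.le_def, not_forall] at hxa
    obtain ⟨j, hj⟩ := hxa
    apply le_antisymm
    · refine le_trans ?_ (Finset.le_sup (Finset.mem_univ j))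
      rw [iota, if_neg (by tauto), hIS j]
    · apply Finset.sup_le
      intro i _
      rw [iota]
      split
      · exact le_trans inf_le_right (le_of_eq (hIS i))
      · exact le_of_eq (hIS i)
end

section
/- Let L be a finite bounded lattice, n ≥ 1, and let f : L^n → L be an n-ary idempotent aggregation function. For a,b,c,d ∈ L with a ≤ b ≤ c and a ≤ d ≤ c, define ι_{(a,b,c),d} : L^3 → L by ι_{(a,b,c),d}(x_1,x_2,x_3) = d ∧ (x_1 ∨ x_2 ∨ x_3) if (x_1,x_2,x_3) ≤ (a,b,c) componentwise, and ι_{(a,b,c),d}(x_1,x_2,x_3) = x_1 ∨ x_2 ∨ x_3 otherwise. Then f(x) = ⋀_{a ∈ L^n} ( ⋁_{i=1}^n ι_{(⋀a, a_i, ⋁a), f(a)}(⋀x, x_i, ⋁x) ) holds for all x ∈ L^n, where ⋀a = ⋀_{j=1}^n a_j, ⋁a = ⋁_{j=1}^n a_j, and similarly for x. -/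
open Classical

/-- For an n-ary idempotent aggregation function `f` on a finite
bounded lattice `L`:
`f(x) = ⋀_{a ∈ Lⁿ} ( ⋁ᵢ ι_{(⋀a, aᵢ, ⋁a), f(a)}(⋀x, xᵢ, ⋁x) )` for all `x ∈ Lⁿ`. -/
theorem idem_agg_eq_inf_sup_iota {L : Type*} [Lattice L] [BoundedOrder L] [Fintype L]
    {n : ℕ} (hn : 1 ≤ n) (f : (Fin n → L) → L)
    (hm : Monotone f)
    (h0 : f (fun _ => (⊥ : L)) = ⊥) (h1 : f (fun _ => (⊤ : L)) = ⊤)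
    (hidem : ∀ c : L, f (fun _ => c) = c) :
    ∀ x : Fin n → L,
      f x =
        (Finset.univ : Finset (Fin n → L)).inf (fun a =>
          Finset.univ.sup (fun i : Fin n =>
            iota (Finset.univ.inf a) (a i) (Finset.univ.sup a) (f a)
              (Finset.univ.inf x) (x i) (Finset.univ.sup x))) := by
  intro x
  have hfM : f x ≤ Finset.univ.sup x := by
    calc f x ≤ f (fun _ => Finset.univ.sup x) :=
          hm (fun i => Finset.le_sup (Finset.mem_univ i))
      _ = _ := hidem _
  apply le_antisymm
  · apply Finset.le_inf
    intro a _
    by_cases h : ∀ i : Fin n, Finset.univ.inf x ≤ Finset.univ.inf a ∧ x i ≤ a i ∧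
        Finset.univ.sup x ≤ Finset.univ.sup a
    · refine le_trans ?_ (Finset.le_sup (Finset.mem_univ (⟨0, hn⟩ : Fin n)))
      rw [iota, if_pos (h ⟨0, hn⟩)]
      exact le_inf (hm fun i => (h i).2.1) (le_trans hfM le_sup_right)
    · obtain ⟨i, hi⟩ := not_forall.mp h
      refine le_trans ?_ (Finset.le_sup (Finset.mem_univ i))
      rw [iota, if_neg hi]
      exact le_trans hfM le_sup_right
  · refine le_trans (Finset.inf_le (Finset.mem_univ x)) ?_
    apply Finset.sup_le
    intro i _
    rw [iota, if_pos ⟨le_refl _, le_refl _, le_refl _⟩]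
    exact inf_le_left
end

section
/- Let L be a bounded lattice and let a,b,c,d ∈ L satisfy a ≤ b ≤ c and a ≤ d ≤ c. For parameters p ≤ q ≤ r and p ≤ s ≤ r in L, define ι_{(p,q,r),s} : L^3 → L by ι_{(p,q,r),s}(x_1,x_2,x_3) = s ∧ (x_1 ∨ x_2 ∨ x_3) if (x_1,x_2,x_3) ≤ (p,q,r) componentwise, and ι_{(p,q,r),s}(x_1,x_2,x_3) = x_1 ∨ x_2 ∨ x_3 otherwise. Then ι_{(a,b,c),d}(x_1,x_2,x_3) = ι_{(a,b,1),d}(x_1,x_2,x_3) ∨ ι_{(a,c,1),d}(x_1,x_3,x_3) holds for all (x_1,x_2,x_3) ∈ L^3 satisfying x_1 ≤ x_2 ≤ x_3. -/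
open Classical

/-- For `a ≤ b ≤ c` and `a ≤ d ≤ c` in a bounded lattice `L`,
`ι_{(a,b,c),d}(x₁,x₂,x₃) = ι_{(a,b,1),d}(x₁,x₂,x₃) ∨ ι_{(a,c,1),d}(x₁,x₃,x₃)`
holds whenever `x₁ ≤ x₂ ≤ x₃`. -/
theorem iota_decomposition {L : Type*} [Lattice L] [BoundedOrder L]
    (a b c d : L) (hab : a ≤ b) (hbc : b ≤ c) (had : a ≤ d) (hdc : d ≤ c) :
    ∀ x₁ x₂ x₃ : L, x₁ ≤ x₂ → x₂ ≤ x₃ →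
      iota a b c d x₁ x₂ x₃ = iota a b ⊤ d x₁ x₂ x₃ ⊔ iota a c ⊤ d x₁ x₃ x₃ := by
  intro x₁ x₂ x₃ h12 h23
  have hj : x₁ ⊔ x₂ ⊔ x₃ = x₃ := by
    rw [sup_assoc, sup_eq_right.mpr h23, sup_eq_right.mpr (h12.trans h23)]
  have hj2 : x₁ ⊔ x₃ ⊔ x₃ = x₃ := by
    rw [sup_assoc, sup_idem, sup_eq_right.mpr (h12.trans h23)]
  unfold iota
  simp only [le_top, and_true, hj, hj2]
  split_ifs <;>
    first
    | exact (sup_idem _).symm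
    | exact (sup_eq_right.mpr inf_le_right).symm
    | exact (sup_eq_left.mpr inf_le_right).symm
    | tauto
end

section
/- Let L be a finite bounded lattice, n ≥ 1, and let f : L^n → L be an n-ary idempotent aggregation function. For p,q,s ∈ L with p ≤ q and p ≤ s, define ι_{(p,q,1),s} : L^3 → L by ι_{(p,q,1),s}(x_1,x_2,x_3) = s ∧ (x_1 ∨ x_2 ∨ x_3) if (x_1,x_2,x_3) ≤ (p,q,1) componentwise, and ι_{(p,q,1),s}(x_1,x_2,x_3) = x_1 ∨ x_2 ∨ x_3 otherwise. Then for all x ∈ L^n: f(x) = ⋀_{a ∈ L^n} ( ⋁_{i=1}^n [ ι_{(⋀a, a_i, 1), f(a)}(⋀x, x_i, ⋁x) ∨ ι_{(⋀a, ⋁a, 1), f(a)}(⋀x, ⋁x, ⋁x) ] ), where ⋀a = ⋀_{j=1}^n a_j, ⋁a = ⋁_{j=1}^n a_j, and similarly for x. -/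
open Classical

/-- For an n-ary idempotent aggregation function `f` on a finite
bounded lattice `L`, for all `x ∈ Lⁿ`:
`f(x) = ⋀_{a ∈ Lⁿ} ( ⋁ᵢ [ ι_{(⋀a, aᵢ, 1), f(a)}(⋀x, xᵢ, ⋁x) ∨
  ι_{(⋀a, ⋁a, 1), f(a)}(⋀x, ⋁x, ⋁x) ] )`. -/
theorem idem_agg_eq_inf_sup_iota_top {L : Type*} [Lattice L] [BoundedOrder L]
    [Fintype L] {n : ℕ} (hn : 1 ≤ n) (f : (Fin n → L) → L)
    (hm : Monotone f)
    (h0 : f (fun _ => (⊥ : L)) = ⊥) (h1 : f (fun _ => (⊤ : L)) = ⊤)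
    (hidem : ∀ c : L, f (fun _ => c) = c) :
    ∀ x : Fin n → L,
      f x =
        (Finset.univ : Finset (Fin n → L)).inf (fun a =>
          Finset.univ.sup (fun i : Fin n =>
            iota (Finset.univ.inf a) (a i) ⊤ (f a)
                (Finset.univ.inf x) (x i) (Finset.univ.sup x) ⊔
              iota (Finset.univ.inf a) (Finset.univ.sup a) ⊤ (f a)
                (Finset.univ.inf x) (Finset.univ.sup x) (Finset.univ.sup x))) := by
  intro x
  have hfle : ∀ y : Fin n → L, f y ≤ Finset.univ.sup y := fun y => by
    calc f y ≤ f (fun _ => Finset.univ.sup y) :=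
          hm (fun i => Finset.le_sup (Finset.mem_univ i))
      _ = _ := hidem _
  have hi0 : (⟨0, hn⟩ : Fin n) ∈ (Finset.univ : Finset (Fin n)) := Finset.mem_univ _
  apply le_antisymm
  · refine Finset.le_inf fun a _ => ?_
    by_cases h2 : Finset.univ.inf x ≤ Finset.univ.inf a ∧
        Finset.univ.sup x ≤ Finset.univ.sup a ∧ Finset.univ.sup x ≤ (⊤ : L)
    · by_cases h3 : ∀ i, x i ≤ a i
      · have hfa : f x ≤ f a := hm h3
        refine le_trans ?_ (Finset.le_sup hi0)
        refine le_trans ?_ le_sup_right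
        rw [iota, if_pos h2]
        exact le_inf hfa (le_trans (hfle x) le_sup_right)
      · push_neg at h3
        obtain ⟨i, hi⟩ := h3
        refine le_trans ?_ (Finset.le_sup (Finset.mem_univ i))
        refine le_trans ?_ le_sup_left
        rw [iota, if_neg (fun hc => hi hc.2.1)]
        exact le_trans (hfle x) le_sup_right
    · refine le_trans ?_ (Finset.le_sup hi0)
      refine le_trans ?_ le_sup_right
      rw [iota, if_neg h2]
      exact le_trans (hfle x) le_sup_right
  · refine le_trans (Finset.inf_le (Finset.mem_univ x)) ?_
    refine Finset.sup_le fun i _ => ?_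
    rw [iota, iota, if_pos ⟨le_rfl, le_rfl, le_top⟩,
      if_pos ⟨le_rfl, le_rfl, le_top⟩]
    exact sup_le inf_le_left inf_le_left
end
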